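/- arXiv:1102.5448 — 8 statements merged into one kernel-verified Lean document; each statement's English description precedes it below -/
import Mathlib

section
/- Let Ω be a set, S ⊆ Ω a subset, l ≥ 1, and let J be a real-valued convex, positively homogeneous functional on the space of functions Ω → ℝ^l that vanishes on every constant function. Let d : {1,…,l}² → ℝ and c > 0 be such that for all i, j ∈ {1,…,l}, J applied to the function u_{ij} (where u_{ij}(x) = e^i if x ∈ S and u_{ij}(x) = e^j otherwise, e^k denoting the k-th standard unit vector of ℝ^l) equals c·d(i,j). Then d(i,i) = 0 for all i, and d is subadditive: d(i,k) ≤ d(i,j) + d(j,k) for all i, j, k ∈ {1,…,l}. -/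
/- STATEMENT 1: Let `J` be a convex, positively homogeneous functional on functions
`Ω → ℝ^l` vanishing on constants. If `J` of the two-valued labeling `u_{ij}`
(equal to `e^i` on `S` and `e^j` elsewhere) equals `c * d i j` for all `i, j`,
then `d i i = 0` and `d` is subadditive. -/
open Classical in
theorem stmt1 {Ω : Type*} (S : Set Ω) (l : ℕ) (hl : 1 ≤ l)
    (J : (Ω → Fin l → ℝ) → ℝ)
    (hconv : ∀ u w : Ω → Fin l → ℝ, ∀ t : ℝ, 0 ≤ t → t ≤ 1 →
      J (t • u + (1 - t) • w) ≤ t * J u + (1 - t) * J w)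
    (hhom : ∀ α : ℝ, 0 < α → ∀ u : Ω → Fin l → ℝ, J (α • u) = α * J u)
    (hconst : ∀ a : Fin l → ℝ, J (fun _ => a) = 0)
    (d : Fin l → Fin l → ℝ) (c : ℝ) (hc : 0 < c)
    (hJd : ∀ i j : Fin l,
      J (fun x => if x ∈ S then (Pi.single i 1 : Fin l → ℝ) else Pi.single j 1) = c * d i j) :
    (∀ i, d i i = 0) ∧ ∀ i j k : Fin l, d i k ≤ d i j + d j k := by
  set u : Fin l → Fin l → Ω → Fin l → ℝ :=
    fun i j => fun x => if x ∈ S then (Pi.single i 1 : Fin l → ℝ) else Pi.single j 1 with hu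
  constructor
  · intro i
    have h1 : J (u i i) = c * d i i := hJd i i
    have h2 : u i i = fun _ => (Pi.single i 1 : Fin l → ℝ) := by
      funext x; simp [hu]
    rw [h2, hconst] at h1
    have := h1.symm
    rcases mul_eq_zero.mp this with h | h
    · exact absurd h hc.ne'
    · exact h
  · intro i j k
    -- key pointwise identity
    have key : u i j + u j k = u i k + (fun _ => (Pi.single j 1 : Fin l → ℝ)) := by
      funext x m
      by_cases hx : x ∈ S <;> simp [hu, hx, add_comm]
    set w : Ω → Fin l → ℝ := u i k + (fun _ => (Pi.single j 1 : Fin l → ℝ)) with hw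
    -- J (u i k) ≤ J w
    have h1 : J (u i k) ≤ J w := by
      have hrep : u i k = (1/2 : ℝ) • ((2:ℝ) • w) +
          (1 - (1/2 : ℝ)) • (fun _ => (-2 : ℝ) • (Pi.single j 1 : Fin l → ℝ)) := by
        funext x m
        simp [hw, Pi.smul_apply, Pi.add_apply]
        ring
      calc J (u i k) ≤ (1/2 : ℝ) * J ((2:ℝ) • w) +
            (1 - (1/2 : ℝ)) * J (fun _ => (-2 : ℝ) • (Pi.single j 1 : Fin l → ℝ)) := by
              rw [hrep]; exact hconv _ _ _ (by norm_num) (by norm_num)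
        _ = (1/2 : ℝ) * ((2:ℝ) * J w) + (1 - (1/2 : ℝ)) * 0 := by
              rw [hhom 2 (by norm_num), hconst]
        _ = J w := by ring
    -- J w ≤ J (u i j) + J (u j k)
    have h2 : J w ≤ J (u i j) + J (u j k) := by
      have hrep : w = (2:ℝ) • ((1/2 : ℝ) • u i j + (1 - (1/2 : ℝ)) • u j k) := by
        rw [← key]; funext x m
        simp [Pi.smul_apply, Pi.add_apply]; ring
      calc J w = (2:ℝ) * J ((1/2 : ℝ) • u i j + (1 - (1/2 : ℝ)) • u j k) := by
              rw [hrep, hhom 2 (by norm_num)]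
        _ ≤ (2:ℝ) * ((1/2 : ℝ) * J (u i j) + (1 - (1/2 : ℝ)) * J (u j k)) := by
              have := hconv (u i j) (u j k) (1/2) (by norm_num) (by norm_num)
              linarith
        _ = J (u i j) + J (u j k) := by ring
    have h3 : c * d i k ≤ c * d i j + c * d j k := by
      rw [← hJd, ← hJd, ← hJd]
      exact le_trans h1 h2
    nlinarith [h3, hc]
end

section
/- Let d : {1,…,l}² → ℝ be a metric and let D_loc^d ⊆ ℝ^{d×l} be the associated dual constraint set (matrices v = (v¹|…|v^l) with columns summing to zero and ‖v^i − v^j‖ ≤ d(i,j) for all i ≠ j). Then for any pair of indices i, j ∈ {1,…,l}, the quantity d(i,j) is the maximum over v ∈ D_loc^d of the difference of first coordinates (v^i)₁ − (v^j)₁; that is, (v^i)₁ − (v^j)₁ ≤ d(i,j) for every v ∈ D_loc^d, and some v ∈ D_loc^d attains equality. -/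
/-! The upper bound holds because a coordinate of a vector is bounded by its norm. For
equality, `k ↦ d k j` is 1-Lipschitz for `d` by the triangle inequality; centring it to mean
zero and placing it along the first basis vector gives a point of `D_loc^d` whose columns
`i` and `j` differ by `d i j - d j j = d i j` in the first coordinate. -/

open Finset

lemma abs_sub_le_of_triangle {ι : Type*} (d : ι → ι → ℝ) (hsymm : ∀ i j, d i j = d j i)
    (htri : ∀ i j k, d i k ≤ d i j + d j k) (a b j : ι) :
    |d a j - d b j| ≤ d a b := by
  rw [abs_sub_le_iff]
  constructor
  · linarith [htri a b j]
  · linarith [htri b a j, hsymm a b]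

lemma sum_sub_average_smul_eq_zero {ι E : Type*} [Fintype ι] [Nonempty ι] [AddCommGroup E]
    [Module ℝ E] (f : ι → ℝ) (e : E) :
    ∑ k, (f k - (∑ k', f k') / Fintype.card ι) • e = 0 := by
  rw [← sum_smul, sum_sub_distrib, sum_const, card_univ, nsmul_eq_mul,
    mul_div_cancel₀ _ (Nat.cast_ne_zero.mpr Fintype.card_ne_zero), sub_self, zero_smul]

lemma norm_sub_smul_sub_sub_smul {E : Type*} [SeminormedAddCommGroup E] [NormedSpace ℝ E]
    (x y c : ℝ) {e : E} (he : ‖e‖ = 1) :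
    ‖(x - c) • e - (y - c) • e‖ = |x - y| := by
  rw [← sub_smul, sub_sub_sub_cancel_right, norm_smul, he, mul_one, Real.norm_eq_abs]

lemma EuclideanSpace.apply_sub_apply_le_norm_sub {n : Type*} [Fintype n]
    (x y : EuclideanSpace ℝ n) (p : n) : x p - y p ≤ ‖x - y‖ := by
  simpa only [PiLp.sub_apply, Real.norm_eq_abs] using
    (le_abs_self _).trans (PiLp.norm_apply_le (x - y) p)

theorem stmt2_general (l m : ℕ) (hm : 0 < m)
    (d : Fin l → Fin l → ℝ)
    (hdiag : ∀ i, d i i = 0)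
    (hsymm : ∀ i j, d i j = d j i)
    (htri : ∀ i j k, d i k ≤ d i j + d j k)
    (Dloc : Set (Fin l → EuclideanSpace ℝ (Fin m)))
    (hD : Dloc = {v | (∑ k, v k) = 0 ∧ ∀ i j, i ≠ j → ‖v i - v j‖ ≤ d i j})
    (i j : Fin l) :
    IsGreatest {x : ℝ | ∃ v ∈ Dloc, x = v i ⟨0, hm⟩ - v j ⟨0, hm⟩} (d i j) := by
  subst hD
  have : Nonempty (Fin l) := ⟨i⟩
  set e := EuclideanSpace.single (⟨0, hm⟩ : Fin m) (1 : ℝ)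
  have he : ‖e‖ = 1 := by simp [e]
  set c := (∑ k, d k j) / Fintype.card (Fin l)
  refine ⟨⟨fun k => (d k j - c) • e, ⟨sum_sub_average_smul_eq_zero _ e, fun a b _ => ?_⟩, ?_⟩, ?_⟩
  · rw [norm_sub_smul_sub_sub_smul _ _ c he]
    exact abs_sub_le_of_triangle d hsymm htri a b j
  · simp [e, hdiag]
  · rintro x ⟨v, ⟨-, hv⟩, rfl⟩
    rcases eq_or_ne i j with rfl | hij
    · simp [hdiag]
    · exact (EuclideanSpace.apply_sub_apply_le_norm_sub _ _ _).trans (hv i j hij)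

theorem stmt2 (l m : ℕ) (hl : 1 ≤ l) (hm : 0 < m)
    (d : Fin l → Fin l → ℝ)
    (hdiag : ∀ i, d i i = 0)
    (hsymm : ∀ i j, d i j = d j i)
    (hpos : ∀ i j, i ≠ j → 0 < d i j)
    (htri : ∀ i j k, d i k ≤ d i j + d j k)
    (Dloc : Set (Fin l → EuclideanSpace ℝ (Fin m)))
    (hD : Dloc = {v | (∑ k, v k) = 0 ∧ ∀ i j, i ≠ j → ‖v i - v j‖ ≤ d i j})
    (i j : Fin l) :
    IsGreatest {x : ℝ | ∃ v ∈ Dloc, x = v i ⟨0, hm⟩ - v j ⟨0, hm⟩} (d i j) :=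
  stmt2_general l m hm d hdiag hsymm htri Dloc hD i j
end

section
/- Let d : {1,…,l}² → ℝ be nonnegative, and let v = (v¹|…|v^l) ∈ ℝ^{d×l} satisfy Σ_{k=1}^l v^k = 0 and ‖v^i − v^j‖ ≤ d(i,j) for all i ≠ j. Then the Frobenius norm of v is bounded by ‖v‖ ≤ min_{1 ≤ i ≤ l} (Σ_{j=1}^l d(i,j)²)^{1/2}. -/
/- Expanding `‖v i - v j‖² = ‖v i‖² - 2⟪v i, v j⟫ + ‖v j‖²` and summing over `j`, the cross
terms vanish because the columns sum to zero, so `∑ j ‖v i - v j‖² = l ‖v i‖² + ‖v‖² ≥ ‖v‖²`.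
Bounding each `‖v i - v j‖` by `d i j` and minimizing over `i` gives the claim. -/

open Finset

section CenteredFamily

variable {ι E : Type*} [Fintype ι] [NormedAddCommGroup E] [InnerProductSpace ℝ E]

theorem sum_norm_sub_sq_eq_of_sum_eq_zero {v : ι → E} (hv : ∑ k, v k = 0) (i : ι) :
    ∑ j, ‖v i - v j‖ ^ 2 = Fintype.card ι * ‖v i‖ ^ 2 + ∑ j, ‖v j‖ ^ 2 := by
  simp only [norm_sub_sq_real, sum_add_distrib, sum_sub_distrib, ← mul_sum, ← inner_sum, hv,
    inner_zero_right, mul_zero, sub_zero, sum_const, card_univ, nsmul_eq_mul]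

theorem sum_norm_sq_le_sum_norm_sub_sq_of_sum_eq_zero {v : ι → E} (hv : ∑ k, v k = 0) (i : ι) :
    ∑ j, ‖v j‖ ^ 2 ≤ ∑ j, ‖v i - v j‖ ^ 2 := by
  rw [sum_norm_sub_sq_eq_of_sum_eq_zero hv i]
  exact le_add_of_nonneg_left (by positivity)

end CenteredFamily

theorem stmt5_general (l m : ℕ) (hl : 0 < l)
    (d : Fin l → Fin l → ℝ)
    (v : Fin l → EuclideanSpace ℝ (Fin m))
    (hsum : (∑ k, v k) = 0)
    (hbnd : ∀ i j, i ≠ j → ‖v i - v j‖ ≤ d i j) :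
    Real.sqrt (∑ k, ‖v k‖ ^ 2) ≤
      Finset.univ.inf' ⟨⟨0, hl⟩, Finset.mem_univ _⟩
        (fun i => Real.sqrt (∑ j, d i j ^ 2)) := by
  refine le_inf' _ _ fun i _ => Real.sqrt_le_sqrt ?_
  refine (sum_norm_sq_le_sum_norm_sub_sq_of_sum_eq_zero hsum i).trans
    (sum_le_sum fun j _ => ?_)
  obtain rfl | hij := eq_or_ne i j
  · simpa using sq_nonneg (d i i)
  · exact pow_le_pow_left₀ (norm_nonneg _) (hbnd i j hij) 2

theorem stmt5 (l m : ℕ) (hl : 0 < l) (hm : 0 < m)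
    (d : Fin l → Fin l → ℝ) (hd : ∀ i j, 0 ≤ d i j)
    (v : Fin l → EuclideanSpace ℝ (Fin m))
    (hsum : (∑ k, v k) = 0)
    (hbnd : ∀ i j, i ≠ j → ‖v i - v j‖ ≤ d i j) :
    Real.sqrt (∑ k, ‖v k‖ ^ 2) ≤
      Finset.univ.inf' ⟨⟨0, hl⟩, Finset.mem_univ _⟩
        (fun i => Real.sqrt (∑ j, d i j ^ 2)) :=
  stmt5_general l m hl d v hsum hbnd
end

section
/- Let D_loc ⊆ ℝ^{d×l} be a nonempty compact set that is invariant under column-wise left multiplication by every orthogonal matrix: for every orthogonal R ∈ ℝ^{d×d} and every v = (v¹|…|v^l) ∈ D_loc, the matrix (Rv¹|…|Rv^l) lies in D_loc. Let Ψ(z) := sup_{v ∈ D_loc} ⟨z, v⟩ denote the support function of D_loc with respect to the Frobenius inner product. Then for all a, b ∈ ℝ^l and every unit vector y ∈ ℝ^d, sup_{v ∈ D_loc} ‖v(b − a)‖ = Ψ(y(b − a)ᵀ), where v(b − a) ∈ ℝ^d is the matrix-vector product and y(b − a)ᵀ ∈ ℝ^{d×l} is the rank-one matrix with entries y_r·(b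 − a)_c. -/
/-
The Frobenius pairing of `v` with the rank-one matrix `y wᵀ` is `y ⬝ᵥ (v w)`, which by
Cauchy–Schwarz is at most `‖v w‖` for a unit vector `y`. Conversely, a reflection `R` sends
`v w` to `‖v w‖ y`, so the pairing at `R v ∈ D_loc` equals `‖v w‖`. Hence the two sets of
values dominate each other and have the same supremum.
-/

open Matrix

namespace Matrix

variable {m n : Type*} [Fintype m] [Fintype n]

theorem sum_sum_vecMulVec_mul_eq_dotProduct_mulVec {R : Type*} [CommSemiring R]
    (y : m → R) (w : n → R) (v : Matrix m n R) :
    ∑ r, ∑ c, vecMulVec y w r c * v r c = y ⬝ᵥ (v *ᵥ w) := by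
  simp only [vecMulVec_apply, dotProduct, mulVec, Finset.mul_sum]
  exact Finset.sum_congr rfl fun r _ => Finset.sum_congr rfl fun c _ => by ring

theorem dotProduct_le_sqrt_sum_sq {y : m → ℝ} (hy : √(∑ i, y i ^ 2) = 1) (t : m → ℝ) :
    y ⬝ᵥ t ≤ √(∑ i, t i ^ 2) := by
  simpa [dotProduct, hy] using Real.sum_mul_le_sqrt_mul_sqrt Finset.univ y t

variable [DecidableEq m]

theorem exists_transpose_mul_self_eq_one_mulVec_eq {x y : m → ℝ}
    (h : ∑ i, x i ^ 2 = ∑ i, y i ^ 2) :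
    ∃ R : Matrix m m ℝ, Rᵀ * R = 1 ∧ R *ᵥ x = y := by
  have hnorm : ‖WithLp.toLp 2 x‖ = ‖WithLp.toLp 2 y‖ := by
    simp [EuclideanSpace.norm_eq, h]
  set ρ := Submodule.reflection (ℝ ∙ (WithLp.toLp 2 x - WithLp.toLp 2 y))ᗮ
  set b := (EuclideanSpace.basisFun m ℝ).toBasis
  refine ⟨LinearMap.toMatrix b b ρ.toLinearEquiv, ?_, ?_⟩
  · exact mem_unitaryGroup_iff'.1 <|
      ρ.toMatrix_mem_unitaryGroup (EuclideanSpace.basisFun m ℝ) (EuclideanSpace.basisFun m ℝ)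
  · have hρ : ρ (WithLp.toLp 2 x) = WithLp.toLp 2 y := Submodule.reflection_sub hnorm
    have hrepr (z : m → ℝ) : ⇑(b.repr (WithLp.toLp 2 z)) = z := rfl
    have := LinearMap.toMatrix_mulVec_repr b b ρ.toLinearEquiv (WithLp.toLp 2 x)
    rwa [hrepr, LinearEquiv.coe_coe, LinearIsometryEquiv.coe_toLinearEquiv, hρ, hrepr] at this

theorem exists_transpose_mul_self_eq_one_dotProduct_mulVec_eq_sqrt {y : m → ℝ}
    (hy : √(∑ i, y i ^ 2) = 1) (t : m → ℝ) :
    ∃ R : Matrix m m ℝ, Rᵀ * R = 1 ∧ y ⬝ᵥ (R *ᵥ t) = √(∑ i, t i ^ 2) := by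
  have hy' : ∑ i, y i ^ 2 = 1 := Real.sqrt_eq_one.1 hy
  have hsq : ∑ i, t i ^ 2 = ∑ i, (√(∑ i, t i ^ 2) • y) i ^ 2 := by
    simp only [Pi.smul_apply, smul_eq_mul, mul_pow, ← Finset.mul_sum, hy', mul_one]
    exact (Real.sq_sqrt (Finset.sum_nonneg fun i _ => sq_nonneg (t i))).symm
  obtain ⟨R, hR, hRt⟩ := exists_transpose_mul_self_eq_one_mulVec_eq hsq
  refine ⟨R, hR, ?_⟩
  rw [hRt, dotProduct_smul, smul_eq_mul]
  simp [dotProduct, ← sq, hy']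

end Matrix

open Matrix in
theorem stmt7_general (m l : ℕ)
    (Dloc : Set (Matrix (Fin m) (Fin l) ℝ))
    (hinv : ∀ R : Matrix (Fin m) (Fin m) ℝ, Rᵀ * R = 1 →
      ∀ v ∈ Dloc, R * v ∈ Dloc)
    (a b : Fin l → ℝ) (y : Fin m → ℝ)
    (hy : Real.sqrt (∑ r, y r ^ 2) = 1) :
    sSup {x : ℝ | ∃ v ∈ Dloc, x = Real.sqrt (∑ r, (v.mulVec (b - a)) r ^ 2)}
      = sSup {x : ℝ | ∃ v ∈ Dloc,
          x = ∑ r, ∑ c, (Matrix.vecMulVec y (b - a)) r c * v r c} := by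
  simp only [sum_sum_vecMulVec_mul_eq_dotProduct_mulVec]
  apply csSup_eq_csSup_of_forall_exists_le
  · rintro _ ⟨v, hv, rfl⟩
    obtain ⟨R, hR, hRv⟩ :=
      exists_transpose_mul_self_eq_one_dotProduct_mulVec_eq_sqrt hy (v *ᵥ (b - a))
    exact ⟨_, ⟨R * v, hinv R hR v hv, rfl⟩, by rw [← mulVec_mulVec, hRv]⟩
  · rintro _ ⟨v, hv, rfl⟩
    exact ⟨_, ⟨v, hv, rfl⟩, dotProduct_le_sqrt_sum_sq hy _⟩

open Matrix in
theorem stmt7 (m l : ℕ) (hm : 0 < m) (hl : 0 < l)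
    (Dloc : Set (Matrix (Fin m) (Fin l) ℝ))
    (hne : Dloc.Nonempty) (hcomp : IsCompact Dloc)
    (hinv : ∀ R : Matrix (Fin m) (Fin m) ℝ, Rᵀ * R = 1 →
      ∀ v ∈ Dloc, R * v ∈ Dloc)
    (a b : Fin l → ℝ) (y : Fin m → ℝ)
    (hy : Real.sqrt (∑ r, y r ^ 2) = 1) :
    sSup {x : ℝ | ∃ v ∈ Dloc, x = Real.sqrt (∑ r, (v.mulVec (b - a)) r ^ 2)}
      = sSup {x : ℝ | ∃ v ∈ Dloc,
          x = ∑ r, ∑ c, (Matrix.vecMulVec y (b - a)) r c * v r c} :=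
  stmt7_general m l Dloc hinv a b y hy
end

section
/- Fix indices i ≠ j in {1,…,l} and a real r ≥ 0, and let S := {v ∈ ℝ^{d×l} : ‖v^i − v^j‖ ≤ r}, where v^k denotes the k-th column. Equip ℝ^{d×l} with the Frobenius inner product. For v ∈ ℝ^{d×l}: if ‖v^i − v^j‖ ≤ r then v itself is the nearest point of S to v; otherwise, the unique nearest point of S to v is the matrix w with w^k = v^k for k ∉ {i,j}, w^i = v^i − ((‖v^i − v^j‖ − r)/2)·(v^i − v^j)/‖v^i − v^j‖, and w^j = v^j + ((‖v^i − v^j‖ − r)/2)·(v^i − v^j)/‖v^i − v^j‖. That is, w ∈ S and ‖v − w‖ ≤ ‖v − x‖ for every x ∈ S, with equality only for x = w. -/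
open scoped RealInnerProductSpace

/- STATEMENT 10: Projection onto `S := {v : ‖v i - v j‖ ≤ r}` in ℝ^{m×l} with the
Frobenius inner product: if `‖v i - v j‖ ≤ r` then `v` is its own (unique)
nearest point of `S`; otherwise the matrix `w` obtained by symmetrically moving
columns `i` and `j` towards each other by `(‖v i − v j‖ − r)/2` along the unit
direction `(v i − v j)/‖v i − v j‖` is the unique nearest point of `S` to `v`. -/
theorem stmt10 (m l : ℕ) (hm : 0 < m) (hl : 2 ≤ l)
    (i j : Fin l) (hij : i ≠ j) (r : ℝ) (hr : 0 ≤ r)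
    (S : Set (PiLp 2 fun _ : Fin l => EuclideanSpace ℝ (Fin m)))
    (hS : S = {v | ‖v i - v j‖ ≤ r})
    (v : PiLp 2 fun _ : Fin l => EuclideanSpace ℝ (Fin m)) :
    (‖v i - v j‖ ≤ r →
      v ∈ S ∧ ∀ x ∈ S, ‖v - v‖ ≤ ‖v - x‖ ∧ (‖v - v‖ = ‖v - x‖ → x = v)) ∧
    (r < ‖v i - v j‖ →
      ∀ w : PiLp 2 fun _ : Fin l => EuclideanSpace ℝ (Fin m),
        (∀ k, k ≠ i → k ≠ j → w k = v k) →
        w i = v i - ((‖v i - v j‖ - r) / 2) • (‖v i - v j‖⁻¹ • (v i - v j)) →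
        w j = v j + ((‖v i - v j‖ - r) / 2) • (‖v i - v j‖⁻¹ • (v i - v j)) →
        w ∈ S ∧ ∀ x ∈ S, ‖v - w‖ ≤ ‖v - x‖ ∧ (‖v - w‖ = ‖v - x‖ → x = w)) := by
  have final : ∀ a b e t : ℝ, 0 ≤ a → 0 ≤ b → 0 ≤ e → t ≤ 0 →
      b ^ 2 = a ^ 2 + 2 * (-t) + e ^ 2 → a ≤ b ∧ (a = b → e = 0) := by
    intro a b e t ha hb he ht hex
    constructor
    · nlinarith
    · intro hab; nlinarith
  constructor
  · intro hv
    refine ⟨by rw [hS]; exact hv, fun x hx => ?_⟩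
    refine ⟨by simp, fun h => ?_⟩
    have h0 : ‖v - x‖ = 0 := by simpa using h.symm
    exact (sub_eq_zero.mp (norm_eq_zero.mp h0)).symm
  · intro hn w hwk hwi hwj
    obtain ⟨n, hndef⟩ : ∃ n, n = ‖v i - v j‖ := ⟨_, rfl⟩
    rw [← hndef] at hn hwi hwj
    have hn0 : 0 < n := lt_of_le_of_lt hr hn
    obtain ⟨u, hu⟩ : ∃ u, u = n⁻¹ • (v i - v j) := ⟨_, rfl⟩
    obtain ⟨c, hc⟩ : ∃ c, c = (n - r) / 2 := ⟨_, rfl⟩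
    rw [← hu, ← hc] at hwi hwj
    have hvij : v i - v j = n • u := by
      rw [hu, smul_smul, mul_inv_cancel₀ hn0.ne', one_smul]
    have hu1 : ‖u‖ = 1 := by
      rw [hu, norm_smul, norm_inv, Real.norm_eq_abs, abs_of_pos hn0, ← hndef]
      exact inv_mul_cancel₀ hn0.ne'
    have hc0 : 0 < c := by rw [hc]; linarith
    have hwij : w i - w j = r • u := by
      rw [hwi, hwj]
      have h1 : v i - c • u - (v j + c • u) = (v i - v j) - (2 * c) • u := by
        rw [two_mul, add_smul]; abel
      rw [h1, hvij, ← sub_smul]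
      congr 1
      rw [hc]; ring
    have hwS : w ∈ S := by
      rw [hS]
      show ‖w i - w j‖ ≤ r
      rw [hwij, norm_smul, hu1, mul_one, Real.norm_eq_abs, abs_of_nonneg hr]
    refine ⟨hwS, fun x hx => ?_⟩
    have hxr : ‖x i - x j‖ ≤ r := by rw [hS] at hx; exact hx
    have hdi : (v - w) i = c • u := by
      rw [PiLp.sub_apply, hwi]; abel
    have hdj : (v - w) j = -(c • u) := by
      rw [PiLp.sub_apply, hwj]; abel
    have hru : ⟪u, w i - w j⟫ = r := by
      rw [hwij, real_inner_smul_right, real_inner_self_eq_norm_sq, hu1]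
      ring
    have h2 : ⟪u, x i - w i⟫ - ⟪u, x j - w j⟫ = ⟪u, x i - x j⟫ - r := by
      have e1 : (x i - w i) - (x j - w j) = (x i - x j) - (w i - w j) := by abel
      calc ⟪u, x i - w i⟫ - ⟪u, x j - w j⟫
          = ⟪u, (x i - w i) - (x j - w j)⟫ := (inner_sub_right _ _ _).symm
        _ = ⟪u, (x i - x j) - (w i - w j)⟫ := by rw [e1]
        _ = ⟪u, x i - x j⟫ - ⟪u, w i - w j⟫ := inner_sub_right _ _ _
        _ = ⟪u, x i - x j⟫ - r := by rw [hru]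
    have hsum : ⟪v - w, x - w⟫ = c * (⟪u, x i - x j⟫ - r) := by
      rw [PiLp.inner_apply]
      have hsub : ∑ k, ⟪(v - w) k, (x - w) k⟫
          = ∑ k ∈ ({i, j} : Finset (Fin l)), ⟪(v - w) k, (x - w) k⟫ := by
        refine (Finset.sum_subset (Finset.subset_univ _) ?_).symm
        intro k _ hk
        simp only [Finset.mem_insert, Finset.mem_singleton, not_or] at hk
        have h0 : (v - w) k = 0 := by
          rw [PiLp.sub_apply, hwk k hk.1 hk.2, sub_self]
        rw [h0, inner_zero_left]
      rw [hsub, Finset.sum_pair hij, hdi, hdj, PiLp.sub_apply, PiLp.sub_apply,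
        inner_neg_left, real_inner_smul_left, real_inner_smul_left]
      linear_combination c * h2
    have key : ⟪v - w, x - w⟫ ≤ 0 := by
      rw [hsum]
      have hcs : ⟪u, x i - x j⟫ ≤ r :=
        calc ⟪u, x i - x j⟫ ≤ ‖u‖ * ‖x i - x j‖ := real_inner_le_norm _ _
          _ = ‖x i - x j‖ := by rw [hu1, one_mul]
          _ ≤ r := hxr
      nlinarith
    have hexp : ‖v - x‖ ^ 2 = ‖v - w‖ ^ 2 + 2 * (-⟪v - w, x - w⟫) + ‖x - w‖ ^ 2 := by
      have e2 : v - x = (v - w) + (w - x) := by abel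
      have e3 : w - x = -(x - w) := by abel
      rw [e2, norm_add_sq_real, e3, inner_neg_right, norm_neg]
    obtain ⟨hle, heq⟩ := final ‖v - w‖ ‖v - x‖ ‖x - w‖ ⟪v - w, x - w⟫
      (norm_nonneg _) (norm_nonneg _) (norm_nonneg _) key hexp
    refine ⟨hle, fun h => ?_⟩
    exact sub_eq_zero.mp (norm_eq_zero.mp (heq h))
end

section
/- Let E be a finite-dimensional real inner product space, W ⊆ E a linear subspace, and R := W^⊥ its orthogonal complement. Let S ⊆ E be a nonempty closed convex set that is invariant under translations by W, i.e. s + w ∈ S for all s ∈ S and w ∈ W. Then R ∩ S is nonempty, and for every v ∈ E the nearest-point projection onto R ∩ S factors as Π_{R∩S}(v) = Π_R(Π_S(v)), where Π_S(v) is the unique nearest point of S to v and Π_R is the orthogonal projection onto the subspace R. -/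
/-!
Write `P` for the orthogonal projection onto `Wᗮ`, so that `u - P u ∈ W`. Invariance of `S` under
`W` makes `P` map `S` into itself. For `x ∈ Wᗮ`, Pythagoras gives
`‖v - x‖² = ‖v - P v‖² + ‖P v - x‖²`, so it suffices to compare distances to `P v`. For
`x ∈ Wᗮ ∩ S` the point `x + (v - P v)` lies in `S`, hence
`‖P v - P pS‖ ≤ ‖v - pS‖ ≤ ‖v - (x + (v - P v))‖ = ‖P v - x‖`.
-/

namespace Submodule

variable {E : Type*} [NormedAddCommGroup E] [InnerProductSpace ℝ E]

theorem norm_sub_sq_eq_norm_sub_starProjection_sq_add (U : Submodule ℝ E)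
    [U.HasOrthogonalProjection] (v : E) {x : E} (hx : x ∈ U) :
    ‖v - x‖ ^ 2 = ‖v - U.starProjection v‖ ^ 2 + ‖U.starProjection v - x‖ ^ 2 := by
  have horth : inner ℝ (v - U.starProjection v) (U.starProjection v - x) = 0 :=
    U.inner_left_of_mem_orthogonal (U.sub_mem (U.starProjection_apply_mem v) hx)
      (U.sub_starProjection_mem_orthogonal v)
  rw [← sub_add_sub_cancel v (U.starProjection v) x, norm_add_sq_real, horth, mul_zero, add_zero]

theorem norm_sub_le_norm_sub_of_norm_starProjection_sub_le (U : Submodule ℝ E)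
    [U.HasOrthogonalProjection] {v x y : E} (hx : x ∈ U) (hy : y ∈ U)
    (h : ‖U.starProjection v - x‖ ≤ ‖U.starProjection v - y‖) : ‖v - x‖ ≤ ‖v - y‖ := by
  have hsq : ‖v - x‖ ^ 2 ≤ ‖v - y‖ ^ 2 := by
    rw [U.norm_sub_sq_eq_norm_sub_starProjection_sq_add v hx,
      U.norm_sub_sq_eq_norm_sub_starProjection_sq_add v hy]
    gcongr
  exact (pow_le_pow_iff_left₀ (norm_nonneg _) (norm_nonneg _) two_ne_zero).mp hsq

variable (K : Submodule ℝ E) [K.HasOrthogonalProjection] {S : Set E}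

theorem starProjection_orthogonal_mem_of_add_mem (hS : ∀ s ∈ S, ∀ w ∈ K, s + w ∈ S) {u : E}
    (hu : u ∈ S) : Kᗮ.starProjection u ∈ S := by
  rw [starProjection_orthogonal_val, sub_eq_add_neg]
  exact hS u hu _ (K.neg_mem (K.starProjection_apply_mem u))

theorem norm_sub_starProjection_orthogonal_le (hS : ∀ s ∈ S, ∀ w ∈ K, s + w ∈ S) {v p : E}
    (hp : ∀ x ∈ S, ‖v - p‖ ≤ ‖v - x‖) {x : E} (hxK : x ∈ Kᗮ) (hxS : x ∈ S) :
    ‖v - Kᗮ.starProjection p‖ ≤ ‖v - x‖ := by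
  refine Kᗮ.norm_sub_le_norm_sub_of_norm_starProjection_sub_le
    (Kᗮ.starProjection_apply_mem p) hxK ?_
  have hshift : v - (x + K.starProjection v) = Kᗮ.starProjection v - x := by
    rw [starProjection_orthogonal_val]; abel
  calc ‖Kᗮ.starProjection v - Kᗮ.starProjection p‖
      = ‖Kᗮ.starProjection (v - p)‖ := by rw [map_sub]
    _ ≤ ‖v - p‖ := Kᗮ.norm_starProjection_apply_le _
    _ ≤ ‖v - (x + K.starProjection v)‖ := hp _ (hS x hxS _ (K.starProjection_apply_mem v))
    _ = ‖Kᗮ.starProjection v - x‖ := by rw [hshift]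

end Submodule

theorem stmt11_general {E : Type*} [NormedAddCommGroup E] [InnerProductSpace ℝ E]
    [FiniteDimensional ℝ E]
    (W : Submodule ℝ E) (S : Set E)
    (hne : S.Nonempty)
    (hinv : ∀ s ∈ S, ∀ w ∈ W, s + w ∈ S) :
    ((Wᗮ : Set E) ∩ S).Nonempty ∧
    ∀ v pS : E, pS ∈ S → (∀ x ∈ S, ‖v - pS‖ ≤ ‖v - x‖) →
      ((Submodule.orthogonalProjectionOnto Wᗮ pS : E) ∈ (Wᗮ : Set E) ∩ S ∧
        ∀ x ∈ (Wᗮ : Set E) ∩ S, ‖v - (Submodule.orthogonalProjectionOnto Wᗮ pS : E)‖ ≤ ‖v - x‖) := by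
  simp only [Submodule.coe_orthogonalProjectionOnto_apply]
  have hmem : ∀ u ∈ S, Wᗮ.starProjection u ∈ (Wᗮ : Set E) ∩ S := fun u hu =>
    ⟨Wᗮ.starProjection_apply_mem u, W.starProjection_orthogonal_mem_of_add_mem hinv hu⟩
  obtain ⟨s, hs⟩ := hne
  refine ⟨⟨_, hmem s hs⟩, fun v pS hpS hnear => ⟨hmem pS hpS, ?_⟩⟩
  rintro x ⟨hxW, hxS⟩
  exact W.norm_sub_starProjection_orthogonal_le hinv hnear hxW hxS

theorem stmt11 {E : Type*} [NormedAddCommGroup E] [InnerProductSpace ℝ E]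
    [FiniteDimensional ℝ E]
    (W : Submodule ℝ E) (S : Set E)
    (hne : S.Nonempty) (hcl : IsClosed S) (hconv : Convex ℝ S)
    (hinv : ∀ s ∈ S, ∀ w ∈ W, s + w ∈ S) :
    ((Wᗮ : Set E) ∩ S).Nonempty ∧
    ∀ v pS : E, pS ∈ S → (∀ x ∈ S, ‖v - pS‖ ≤ ‖v - x‖) →
      ((Submodule.orthogonalProjectionOnto Wᗮ pS : E) ∈ (Wᗮ : Set E) ∩ S ∧
        ∀ x ∈ (Wᗮ : Set E) ∩ S, ‖v - (Submodule.orthogonalProjectionOnto Wᗮ pS : E)‖ ≤ ‖v - x‖) :=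
  stmt11_general W S hne hinv
end

section
/- Let C ⊆ ℝ^n and D ⊆ ℝ^m be nonempty compact convex sets, L ∈ ℝ^{m×n}, s ∈ ℝ^n, b ∈ ℝ^m, τ > 0, and define g(u,v) = ⟨u,s⟩ + ⟨Lu,v⟩ − ⟨b,v⟩, f(u) = max_{v∈D} g(u,v), f_D(v) = min_{u∈C} g(u,v). Run the Douglas–Rachford iteration: from arbitrary ū⁽⁰⁾ ∈ ℝ^n, w̄⁽⁰⁾ ∈ ℝ^m, for k = 0,1,2,… set u⁽ᵏ⁾ := Π_C(ū⁽ᵏ⁾ − τs), w''⁽ᵏ⁾ := Π_D((1/τ)(w̄⁽ᵏ⁾ − b)), u'⁽ᵏ⁾ := (I + LᵀL)^{−1}((2u⁽ᵏ⁾ − ū⁽ᵏ⁾) + Lᵀ(w̄⁽ᵏ⁾ − 2τ w''⁽ᵏ⁾)), w'⁽ᵏ⁾ := L u'⁽ᵏ⁾, ū⁽ᵏ⁺¹⁾ := ū⁽ᵏ⁾ + u'⁽ᵏ⁾ − u⁽ᵏ⁾, w̄⁽ᵏ⁺¹⁾ := w'⁽ᵏ⁾ + τ w''⁽ᵏ⁾.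 Then the iterates form a sequence of primal/dual feasible pairs (u⁽ᵏ⁾, w''⁽ᵏ⁾) ∈ C × D such that, for any saddle point (u*, v*) of g over C × D, f(u⁽ᵏ⁾) → f(u*) = f_D(v*) and f_D(w''⁽ᵏ⁾) → f_D(v*) = f(u*) as k → ∞; moreover f(u⁽ᵏ⁾) − f(u*) ≤ f(u⁽ᵏ⁾) − f_D(w''⁽ᵏ⁾) for every k. -/
/-!
The iteration is Douglas–Rachford splitting in the Hilbert space `E × F` for minimising
`⟪u, s⟫ + ι_C u + σ_D (w - b)` over the graph of `L` (`σ_D` the support function of `D`): the two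
resolvents are the proximal map of the first summand, whose dual component comes from Moreau's
decomposition, and the orthogonal projection onto the graph. Both are firmly nonexpansive, hence so
is the Douglas–Rachford operator `T`, and in finite dimension the orbit of a firmly nonexpansive map
with a fixed point converges to a fixed point (Fejér monotonicity plus a convergent subsequence).
By the variational inequalities of the projections onto `C` and `D`, the fixed points of `T` are
exactly the points `(u - τ L† v, L u + τ v)` with `(u, v)` a saddle point. Hence `u⁽ᵏ⁾` and
`w''⁽ᵏ⁾`, continuous images of the iterates, converge to a saddle point; `f` and `f_D` are
continuous since `C` and `D` are compact, and all saddle points have the same value.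
-/

open scoped RealInnerProductSpace
open Filter Topology Function

theorem inv_smul_add_smul_sub {K M : Type*} [Field K] [AddCommGroup M] [Module K M] {τ : K}
    (hτ : τ ≠ 0) (a c v : M) : τ⁻¹ • (a + τ • v - c) = v + τ⁻¹ • (a - c) := by
  rw [add_sub_right_comm, smul_add, smul_smul, inv_mul_cancel₀ hτ, one_smul, add_comm]

section Hilbert

variable {H : Type*} [NormedAddCommGroup H] [InnerProductSpace ℝ H]

def FirmlyNonexpansive (T : H → H) : Prop :=
  ∀ x y, ‖T x - T y‖ ^ 2 ≤ ⟪x - y, T x - T y⟫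

namespace FirmlyNonexpansive

variable {T : H → H}

theorem norm_sub_le (hT : FirmlyNonexpansive T) (x y : H) : ‖T x - T y‖ ≤ ‖x - y‖ := by
  have := (hT x y).trans (real_inner_le_norm _ _)
  nlinarith [norm_nonneg (T x - T y), norm_nonneg (x - y)]

theorem continuous (hT : FirmlyNonexpansive T) : Continuous T :=
  (LipschitzWith.of_dist_le_mul fun x y => by
    simpa [dist_eq_norm] using hT.norm_sub_le x y : LipschitzWith 1 T).continuous

theorem norm_sq_add_norm_sq_le (hT : FirmlyNonexpansive T) (x y : H) :
    ‖T x - T y‖ ^ 2 + ‖(x - T x) - (y - T y)‖ ^ 2 ≤ ‖x - y‖ ^ 2 := by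
  have h : (x - T x) - (y - T y) = (x - y) - (T x - T y) := by abel
  rw [h, norm_sub_sq_real (x - y)]
  linarith [hT x y]

theorem comp_sub_const (hT : FirmlyNonexpansive T) (c : H) :
    FirmlyNonexpansive fun x => T (x - c) := fun x y => by
  simpa using hT (x - c) (y - c)

theorem id_sub (hT : FirmlyNonexpansive T) : FirmlyNonexpansive fun x => x - T x := fun x y => by
  have h : (x - T x) - (y - T y) = (x - y) - (T x - T y) := by abel
  rw [h, norm_sub_sq_real (x - y), inner_sub_right (x - y) (x - y), real_inner_self_eq_norm_sq]
  linarith [hT x y]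

theorem smul_comp_smul (hT : FirmlyNonexpansive T) {τ : ℝ} (hτ : 0 < τ) (c : H) :
    FirmlyNonexpansive fun x => τ • T (τ⁻¹ • (x - c)) := fun x y => by
  have h := hT (τ⁻¹ • (x - c)) (τ⁻¹ • (y - c))
  rw [← smul_sub, sub_sub_sub_cancel_right, real_inner_smul_left] at h
  dsimp only
  rw [← smul_sub, norm_smul, mul_pow, Real.norm_of_nonneg hτ.le, real_inner_smul_right]
  calc τ ^ 2 * ‖T (τ⁻¹ • (x - c)) - T (τ⁻¹ • (y - c))‖ ^ 2
      ≤ τ ^ 2 * (τ⁻¹ * ⟪x - y, T (τ⁻¹ • (x - c)) - T (τ⁻¹ • (y - c))⟫) := by gcongr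
    _ = τ * ⟪x - y, T (τ⁻¹ • (x - c)) - T (τ⁻¹ • (y - c))⟫ := by field_simp

theorem of_midpoint {R : H → H} (hR : ∀ x y, ‖R x - R y‖ ≤ ‖x - y‖) :
    FirmlyNonexpansive fun x => (2⁻¹ : ℝ) • (x + R x) := fun x y => by
  have h : (2⁻¹ : ℝ) • (x + R x) - (2⁻¹ : ℝ) • (y + R y) = (2⁻¹ : ℝ) • ((x - y) + (R x - R y)) := by
    module
  rw [h, norm_smul, mul_pow, real_inner_smul_right, norm_add_sq_real, inner_add_right,
    real_inner_self_eq_norm_sq, Real.norm_of_nonneg (by norm_num)]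
  nlinarith [hR x y, norm_nonneg (R x - R y)]

theorem reflection_norm_sub_le (hT : FirmlyNonexpansive T) (x y : H) :
    ‖((2 : ℝ) • T x - x) - ((2 : ℝ) • T y - y)‖ ≤ ‖x - y‖ := by
  have h : ((2 : ℝ) • T x - x) - ((2 : ℝ) • T y - y) = (2 : ℝ) • (T x - T y) - (x - y) := by
    module
  refine le_of_sq_le_sq ?_ (norm_nonneg _)
  rw [h, norm_sub_sq_real, norm_smul, real_inner_smul_left, real_inner_comm, Real.norm_two]
  nlinarith [hT x y]

theorem prodMap {E F : Type*} [NormedAddCommGroup E] [InnerProductSpace ℝ E]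
    [NormedAddCommGroup F] [InnerProductSpace ℝ F] {P : E → E} {Q : F → F}
    (hP : FirmlyNonexpansive P) (hQ : FirmlyNonexpansive Q) :
    FirmlyNonexpansive fun x : WithLp 2 (E × F) => WithLp.toLp 2 (P x.fst, Q x.snd) :=
  fun x y => by
    rw [WithLp.prod_norm_sq_eq_of_L2, WithLp.prod_inner_apply]
    exact add_le_add (hP _ _) (hQ _ _)

end FirmlyNonexpansive

def drStep (P₁ P₂ : H → H) (x : H) : H := x + P₂ ((2 : ℝ) • P₁ x - x) - P₁ x

theorem FirmlyNonexpansive.drStep {P₁ P₂ : H → H} (h₁ : FirmlyNonexpansive P₁)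
    (h₂ : FirmlyNonexpansive P₂) : FirmlyNonexpansive (drStep P₁ P₂) := by
  set R₁ : H → H := fun x => (2 : ℝ) • P₁ x - x
  have h : _root_.drStep P₁ P₂ = fun x => (2⁻¹ : ℝ) • (x + ((2 : ℝ) • P₂ (R₁ x) - R₁ x)) := by
    funext x
    simp only [_root_.drStep, R₁]
    module
  rw [h]
  exact of_midpoint fun x y =>
    (h₂.reflection_norm_sub_le (R₁ x) (R₁ y)).trans (h₁.reflection_norm_sub_le x y)

theorem isFixedPt_drStep_iff {P₁ P₂ : H → H} {x : H} :
    IsFixedPt (drStep P₁ P₂) x ↔ P₂ ((2 : ℝ) • P₁ x - x) = P₁ x := by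
  rw [IsFixedPt, drStep, add_sub_assoc, add_eq_left, sub_eq_zero]

namespace FirmlyNonexpansive

variable {T : H → H} {x : ℕ → H} {z : H}

theorem antitone_norm_sub (hT : FirmlyNonexpansive T) (hx : ∀ k, x (k + 1) = T (x k))
    (hz : IsFixedPt T z) : Antitone fun k => ‖x k - z‖ :=
  antitone_nat_of_succ_le fun k => by
    simpa only [hx k, hz.eq] using hT.norm_sub_le (x k) z

theorem tendsto_sub_succ (hT : FirmlyNonexpansive T) (hx : ∀ k, x (k + 1) = T (x k))
    (hz : IsFixedPt T z) : Tendsto (fun k => x k - x (k + 1)) atTop (𝓝 0) := by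
  have hstep (k : ℕ) : ‖x (k + 1) - z‖ ^ 2 + ‖x k - x (k + 1)‖ ^ 2 ≤ ‖x k - z‖ ^ 2 := by
    simpa [hx k, hz.eq] using hT.norm_sq_add_norm_sq_le (x k) z
  have hsum (N : ℕ) :
      ∑ k ∈ Finset.range N, ‖x k - x (k + 1)‖ ^ 2 + ‖x N - z‖ ^ 2 ≤ ‖x 0 - z‖ ^ 2 := by
    induction N with
    | zero => simp
    | succ N ih => rw [Finset.sum_range_succ]; linarith [hstep N]
  have hsq : Tendsto (fun k => ‖x k - x (k + 1)‖ ^ 2) atTop (𝓝 0) :=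
    (summable_of_sum_range_le (c := ‖x 0 - z‖ ^ 2) (fun _ => sq_nonneg _) fun N => by
      linarith [hsum N, sq_nonneg ‖x N - z‖]).tendsto_atTop_zero
  rw [tendsto_zero_iff_norm_tendsto_zero]
  simpa only [Real.sqrt_sq (norm_nonneg _), Real.sqrt_zero] using hsq.sqrt

theorem exists_tendsto_isFixedPt [ProperSpace H] (hT : FirmlyNonexpansive T)
    (hx : ∀ k, x (k + 1) = T (x k)) (hz : IsFixedPt T z) :
    ∃ x', IsFixedPt T x' ∧ Tendsto x atTop (𝓝 x') := by
  obtain ⟨x', -, φ, hφ, hlim⟩ := tendsto_subseq_of_bounded (x := x)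
    (Metric.isBounded_closedBall (x := z) (r := ‖x 0 - z‖)) fun k => by
      rw [Metric.mem_closedBall, dist_eq_norm]
      exact hT.antitone_norm_sub hx hz (Nat.zero_le k)
  have hfix : IsFixedPt T x' := by
    have h₁ : Tendsto (fun j => x (φ j + 1)) atTop (𝓝 (T x')) := by
      simpa [Function.comp_def, hx] using (hT.continuous.tendsto x').comp hlim
    have h₂ : Tendsto (fun j => x (φ j + 1)) atTop (𝓝 x') := by
      simpa using hlim.sub ((hT.tendsto_sub_succ hx hz).comp hφ.tendsto_atTop)
    exact tendsto_nhds_unique h₁ h₂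
  refine ⟨x', hfix, ?_⟩
  rw [tendsto_iff_norm_sub_tendsto_zero,
    tendsto_iff_tendsto_subseq_of_antitone (hT.antitone_norm_sub hx hfix) hφ.tendsto_atTop]
  exact tendsto_iff_norm_sub_tendsto_zero.1 hlim

end FirmlyNonexpansive

def IsNearestPointMap (K : Set H) (P : H → H) : Prop :=
  ∀ y, P y ∈ K ∧ ∀ x ∈ K, ‖y - P y‖ ≤ ‖y - x‖

namespace IsNearestPointMap

variable {K : Set H} {P : H → H}

theorem inner_sub_le_zero (hP : IsNearestPointMap K P) (hK : Convex ℝ K) (y : H) :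
    ∀ x ∈ K, ⟪y - P y, x - P y⟫ ≤ 0 := by
  have : Nonempty K := ⟨⟨P y, (hP y).1⟩⟩
  refine (norm_eq_iInf_iff_real_inner_le_zero hK (hP y).1).1 (le_antisymm ?_ ?_)
  · exact le_ciInf fun w => (hP y).2 w w.2
  · exact ciInf_le ⟨0, by rintro _ ⟨w, rfl⟩; positivity⟩ (⟨P y, (hP y).1⟩ : K)

theorem apply_eq_iff (hP : IsNearestPointMap K P) (hK : Convex ℝ K) {y z : H} :
    P y = z ↔ z ∈ K ∧ ∀ x ∈ K, ⟪y - z, x - z⟫ ≤ 0 := by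
  refine ⟨by rintro rfl; exact ⟨(hP y).1, hP.inner_sub_le_zero hK y⟩, fun ⟨hz, hvi⟩ => ?_⟩
  have e : ‖P y - z‖ ^ 2 = ⟪y - z, P y - z⟫ + ⟪y - P y, z - P y⟫ := by
    simp only [← real_inner_self_eq_norm_sq, inner_sub_left, inner_sub_right, real_inner_comm]
    ring
  have : ‖P y - z‖ ^ 2 ≤ 0 := by
    linarith [hvi (P y) (hP y).1, hP.inner_sub_le_zero hK y z hz]
  rw [← sub_eq_zero, ← norm_eq_zero]
  nlinarith [norm_nonneg (P y - z)]

theorem firmlyNonexpansive (hP : IsNearestPointMap K P) (hK : Convex ℝ K) :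
    FirmlyNonexpansive P := fun a b => by
  have e : ⟪a - b, P a - P b⟫ =
      ‖P a - P b‖ ^ 2 - ⟪a - P a, P b - P a⟫ - ⟪b - P b, P a - P b⟫ := by
    simp only [← real_inner_self_eq_norm_sq, inner_sub_left, inner_sub_right, real_inner_comm]
    ring
  linarith [hP.inner_sub_le_zero hK a (P b) (hP b).1, hP.inner_sub_le_zero hK b (P a) (hP a).1]

end IsNearestPointMap

end Hilbert

section SaddlePoint

variable {α β : Type*} {g : α → β → ℝ} {C : Set α} {D : Set β} {u u' : α} {v v' : β}

theorem isSaddlePointOn_iff_forall_le (hu : u ∈ C) (hv : v ∈ D) :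
    IsSaddlePointOn C D g u v ↔ (∀ u' ∈ C, g u v ≤ g u' v) ∧ ∀ v' ∈ D, g u v' ≤ g u v :=
  ⟨fun h => ⟨fun u' hu' => h u' hu' v hv, fun v' hv' => h u hu v' hv'⟩,
    fun h u' hu' v' hv' => (h.2 v' hv').trans (h.1 u' hu')⟩

namespace IsSaddlePointOn

theorem sSup_image_eq (h : IsSaddlePointOn C D g u v) (hu : u ∈ C) (hv : v ∈ D) :
    sSup (g u '' D) = g u v :=
  IsGreatest.csSup_eq ⟨⟨v, hv, rfl⟩, by rintro _ ⟨v', hv', rfl⟩; exact h u hu v' hv'⟩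

theorem sInf_image_eq (h : IsSaddlePointOn C D g u v) (hu : u ∈ C) (hv : v ∈ D) :
    sInf ((g · v) '' C) = g u v :=
  IsLeast.csInf_eq ⟨⟨u, hu, rfl⟩, by rintro _ ⟨u', hu', rfl⟩; exact h u' hu' v hv⟩

theorem sInf_image_le (h : IsSaddlePointOn C D g u v) (hu : u ∈ C) (hv' : v' ∈ D)
    (hbdd : BddBelow ((g · v') '' C)) : sInf ((g · v') '' C) ≤ g u v :=
  (csInf_le hbdd ⟨u, hu, rfl⟩).trans (h u hu v' hv')

theorem apply_eq (h : IsSaddlePointOn C D g u v) (h' : IsSaddlePointOn C D g u' v')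
    (hu : u ∈ C) (hv : v ∈ D) (hu' : u' ∈ C) (hv' : v' ∈ D) : g u v = g u' v' :=
  le_antisymm ((h u' hu' v hv).trans (h' u' hu' v hv)) ((h' u hu v' hv').trans (h u hu v' hv'))

end IsSaddlePointOn

end SaddlePoint

section Lagrangian

variable {E F : Type*} [NormedAddCommGroup E] [InnerProductSpace ℝ E]
  [NormedAddCommGroup F] [InnerProductSpace ℝ F]

def lagrangian (L : E →L[ℝ] F) (s : E) (b : F) (u : E) (v : F) : ℝ :=
  ⟪u, s⟫ + ⟪L u, v⟫ - ⟪b, v⟫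

variable (L : E →L[ℝ] F) (s : E) (b : F)

theorem continuous_lagrangian : Continuous fun p : E × F => lagrangian L s b p.1 p.2 := by
  unfold lagrangian
  fun_prop

theorem lagrangian_sub_lagrangian_right (u : E) (w v : F) :
    lagrangian L s b u w - lagrangian L s b u v = ⟪L u - b, w - v⟫ := by
  simp only [lagrangian, inner_sub_left, inner_sub_right]
  ring

theorem lagrangian_sub_lagrangian_left [CompleteSpace E] [CompleteSpace F] (x u : E) (v : F) :
    lagrangian L s b x v - lagrangian L s b u v = ⟪s + L.adjoint v, x - u⟫ := by
  simp only [lagrangian, inner_add_left, ContinuousLinearMap.adjoint_inner_left,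
    inner_sub_right, real_inner_comm s, real_inner_comm v]
  ring

variable {L s b} {C : Set E} {D : Set F} {PC : E → E} {PD : F → F} {τ : ℝ} {u : E} {v : F}

theorem isSaddlePointOn_lagrangian_iff [CompleteSpace E] [CompleteSpace F]
    (hPC : IsNearestPointMap C PC) (hC : Convex ℝ C) (hPD : IsNearestPointMap D PD)
    (hD : Convex ℝ D) (hτ : 0 < τ) (hu : u ∈ C) (hv : v ∈ D) :
    IsSaddlePointOn C D (lagrangian L s b) u v ↔
      PC (u - τ • (s + L.adjoint v)) = u ∧ PD (v + τ⁻¹ • (L u - b)) = v := by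
  have hτ' (a : ℝ) : τ⁻¹ * a ≤ 0 ↔ a ≤ 0 := smul_nonpos_iff_nonpos_of_pos_left (inv_pos.2 hτ)
  rw [isSaddlePointOn_iff_forall_le hu hv, hPC.apply_eq_iff hC, hPD.apply_eq_iff hD]
  simp only [hu, hv, true_and, sub_sub_cancel_left, add_sub_cancel_left, inner_neg_left,
    real_inner_smul_left, neg_nonpos, mul_nonneg_iff_of_pos_left hτ, hτ',
    ← sub_nonneg (b := lagrangian L s b u v), ← sub_nonpos (b := lagrangian L s b u v),
    lagrangian_sub_lagrangian_left, lagrangian_sub_lagrangian_right]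

end Lagrangian

section DouglasRachford

variable {E F : Type*} [NormedAddCommGroup E] [InnerProductSpace ℝ E]
  [NormedAddCommGroup F] [InnerProductSpace ℝ F]

open WithLp

/-- The proximal map of `τ (⟪·, s⟫ + ι_C) ⊕ τ σ_D (· - b)`. -/
noncomputable def primalDualProx (PC : E → E) (PD : F → F) (s : E) (b : F) (τ : ℝ)
    (x : WithLp 2 (E × F)) : WithLp 2 (E × F) :=
  toLp 2 (PC (x.fst - τ • s), x.snd - τ • PD (τ⁻¹ • (x.snd - b)))

variable {s : E} {b : F} {τ : ℝ} {PC : E → E} {PD : F → F}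

theorem firmlyNonexpansive_primalDualProx (hPC : FirmlyNonexpansive PC)
    (hPD : FirmlyNonexpansive PD) (hτ : 0 < τ) :
    FirmlyNonexpansive (primalDualProx PC PD s b τ) := by
  have h := (hPC.comp_sub_const (τ • s)).prodMap (hPD.smul_comp_smul hτ b).id_sub
  exact h

variable [FiniteDimensional ℝ E] [CompleteSpace F]

theorem injective_id_add_adjoint_comp (L : E →L[ℝ] F) :
    Injective fun x => x + L.adjoint (L x) := by
  refine (injective_iff_map_eq_zero (LinearMap.id + (L.adjoint ∘L L : E →ₗ[ℝ] E))).2 fun x hx => ?_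
  have h : ⟪x + L.adjoint (L x), x⟫ = ‖x‖ ^ 2 + ‖L x‖ ^ 2 := by
    rw [inner_add_left, ContinuousLinearMap.adjoint_inner_left, real_inner_self_eq_norm_sq,
      real_inner_self_eq_norm_sq]
  change x + L.adjoint (L x) = 0 at hx
  rw [hx, inner_zero_left] at h
  exact norm_eq_zero.1 (by nlinarith [norm_nonneg x, sq_nonneg ‖L x‖])

noncomputable def idAddAdjointCompEquiv (L : E →L[ℝ] F) : E ≃ₗ[ℝ] E :=
  LinearEquiv.ofInjectiveEndo (LinearMap.id + (L.adjoint ∘L L : E →ₗ[ℝ] E))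
    (injective_id_add_adjoint_comp L)

@[simp]
theorem idAddAdjointCompEquiv_apply (L : E →L[ℝ] F) (x : E) :
    idAddAdjointCompEquiv L x = x + L.adjoint (L x) :=
  rfl

/-- The orthogonal projection onto the graph of `L`. -/
noncomputable def graphProj (L : E →L[ℝ] F) (x : WithLp 2 (E × F)) : WithLp 2 (E × F) :=
  toLp 2 ((idAddAdjointCompEquiv L).symm (x.fst + L.adjoint x.snd),
    L ((idAddAdjointCompEquiv L).symm (x.fst + L.adjoint x.snd)))

theorem graphProj_eq_toLp_iff {L : E →L[ℝ] F} {x : WithLp 2 (E × F)} {u : E} {w : F} :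
    graphProj L x = toLp 2 (u, w) ↔ u + L.adjoint (L u) = x.fst + L.adjoint x.snd ∧ w = L u := by
  have key : (idAddAdjointCompEquiv L).symm (x.fst + L.adjoint x.snd) = u ↔
      u + L.adjoint (L u) = x.fst + L.adjoint x.snd :=
    (LinearEquiv.symm_apply_eq _).trans eq_comm
  rw [graphProj, (toLp_injective 2).eq_iff, Prod.mk.injEq]
  constructor
  · rintro ⟨h, rfl⟩
    exact ⟨key.1 h, by rw [h]⟩
  · rintro ⟨h, rfl⟩
    exact ⟨key.2 h, by rw [key.2 h]⟩

theorem firmlyNonexpansive_graphProj (L : E →L[ℝ] F) : FirmlyNonexpansive (graphProj L) :=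
  fun x y => by
  obtain ⟨p, hp⟩ : ∃ p, graphProj L x = toLp 2 (p, L p) := ⟨_, rfl⟩
  obtain ⟨q, hq⟩ : ∃ q, graphProj L y = toLp 2 (q, L q) := ⟨_, rfl⟩
  have hpq : (x.fst - y.fst) + L.adjoint (x.snd - y.snd) = (p - q) + L.adjoint (L (p - q)) := by
    simp only [map_sub]
    linear_combination (norm := module)
      (graphProj_eq_toLp_iff.1 hq).1 - (graphProj_eq_toLp_iff.1 hp).1
  rw [hp, hq, ← toLp_sub, Prod.mk_sub_mk, ← map_sub, prod_norm_sq_eq_of_L2, prod_inner_apply]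
  simp only [toLp_fst, toLp_snd, ofLp_sub, Prod.fst_sub, Prod.snd_sub, ofLp_fst, ofLp_snd]
  rw [← ContinuousLinearMap.adjoint_inner_left, ← inner_add_left, hpq, inner_add_left,
    ContinuousLinearMap.adjoint_inner_left, real_inner_self_eq_norm_sq, real_inner_self_eq_norm_sq]

variable {L : E →L[ℝ] F}

theorem drStep_toLp {ubar u u' : E} {wbar w : F} (hu : u = PC (ubar - τ • s))
    (hw : w = PD (τ⁻¹ • (wbar - b)))
    (hu' : u' + L.adjoint (L u') = ((2 : ℝ) • u - ubar) + L.adjoint (wbar - (2 * τ) • w)) :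
    drStep (primalDualProx PC PD s b τ) (graphProj L) (toLp 2 (ubar, wbar)) =
      toLp 2 (ubar + u' - u, L u' + τ • w) := by
  have h₁ : primalDualProx PC PD s b τ (toLp 2 (ubar, wbar)) = toLp 2 (u, wbar - τ • w) := by
    rw [primalDualProx, toLp_fst, toLp_snd, hu, hw]
  have h₂ : graphProj L ((2 : ℝ) • toLp 2 (u, wbar - τ • w) - toLp 2 (ubar, wbar)) =
      toLp 2 (u', L u') := by
    refine graphProj_eq_toLp_iff.2 ⟨?_, rfl⟩
    rw [hu']
    simp only [sub_fst, smul_fst, sub_snd, smul_snd, toLp_fst, toLp_snd]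
    congr 2
    module
  rw [drStep, h₁, h₂, ← toLp_add, ← toLp_sub, Prod.mk_add_mk, Prod.mk_sub_mk]
  congr 2
  abel

theorem isFixedPt_drStep_primalDualProx_iff (hτ : τ ≠ 0) {x : WithLp 2 (E × F)} :
    IsFixedPt (drStep (primalDualProx PC PD s b τ) (graphProj L)) x ↔
      ∃ u v, x = toLp 2 (u - τ • L.adjoint v, L u + τ • v) ∧
        PC (u - τ • (s + L.adjoint v)) = u ∧ PD (v + τ⁻¹ • (L u - b)) = v := by
  have hdual (u : E) (v : F) := inv_smul_add_smul_sub hτ (L u) b v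
  constructor
  · intro h
    set u := PC (x.fst - τ • s)
    set v := PD (τ⁻¹ • (x.snd - b))
    obtain ⟨h₁, h₂⟩ := graphProj_eq_toLp_iff.1 (isFixedPt_drStep_iff.1 h)
    simp only [primalDualProx, sub_fst, smul_fst, sub_snd, smul_snd, toLp_fst, toLp_snd] at h₁ h₂
    have hx₁ : x.fst = u - τ • L.adjoint v := by
      rw [← h₂] at h₁
      simp only [map_sub, map_smul] at h₁
      linear_combination (norm := module) h₁
    have hx₂ : x.snd = L u + τ • v := by rw [← h₂]; abel
    refine ⟨u, v, by rw [← hx₁, ← hx₂]; rfl, ?_, ?_⟩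
    · rw [show u - τ • (s + L.adjoint v) = x.fst - τ • s by rw [hx₁]; module]
    · rw [← hdual, ← hx₂]
  · rintro ⟨u, v, rfl, hu, hv⟩
    refine (drStep_toLp (u := u) (w := v) (u' := u) ?_ ?_ ?_).trans ?_
    · refine hu.symm.trans (congrArg PC ?_)
      module
    · rw [hdual, hv]
    · simp only [map_sub, map_add, map_smul]
      module
    · rw [add_sub_cancel_right]

theorem exists_isSaddlePointOn_tendsto_of_drStep [FiniteDimensional ℝ F] {C : Set E} {D : Set F}
    (hC : Convex ℝ C) (hD : Convex ℝ D) (hPC : IsNearestPointMap C PC)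
    (hPD : IsNearestPointMap D PD) (hτ : 0 < τ)
    {ubar u u' : ℕ → E} {wbar w : ℕ → F} (hu : ∀ k, u k = PC (ubar k - τ • s))
    (hw : ∀ k, w k = PD (τ⁻¹ • (wbar k - b)))
    (hu' : ∀ k, u' k + L.adjoint (L (u' k)) =
      ((2 : ℝ) • u k - ubar k) + L.adjoint (wbar k - (2 * τ) • w k))
    (hubar : ∀ k, ubar (k + 1) = ubar k + u' k - u k)
    (hwbar : ∀ k, wbar (k + 1) = L (u' k) + τ • w k)
    {u₀ : E} {v₀ : F} (hu₀ : u₀ ∈ C) (hv₀ : v₀ ∈ D)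
    (hsaddle : IsSaddlePointOn C D (lagrangian L s b) u₀ v₀) :
    ∃ u₁ ∈ C, ∃ v₁ ∈ D, IsSaddlePointOn C D (lagrangian L s b) u₁ v₁ ∧
      Tendsto u atTop (𝓝 u₁) ∧ Tendsto w atTop (𝓝 v₁) := by
  have hT : FirmlyNonexpansive (drStep (primalDualProx PC PD s b τ) (graphProj L)) :=
    (firmlyNonexpansive_primalDualProx (hPC.firmlyNonexpansive hC) (hPD.firmlyNonexpansive hD)
      hτ).drStep (firmlyNonexpansive_graphProj L)
  have hstep (k : ℕ) : toLp 2 (ubar (k + 1), wbar (k + 1)) =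
      drStep (primalDualProx PC PD s b τ) (graphProj L) (toLp 2 (ubar k, wbar k)) := by
    rw [drStep_toLp (hu k) (hw k) (hu' k), hubar, hwbar]
  have hfix₀ := (isFixedPt_drStep_primalDualProx_iff hτ.ne').2
    ⟨u₀, v₀, rfl, (isSaddlePointOn_lagrangian_iff hPC hC hPD hD hτ hu₀ hv₀).1 hsaddle⟩
  obtain ⟨x, hx, hlim⟩ := hT.exists_tendsto_isFixedPt
    (x := fun k => toLp 2 (ubar k, wbar k)) hstep hfix₀
  obtain ⟨u₁, v₁, rfl, hPCu, hPDv⟩ := (isFixedPt_drStep_primalDualProx_iff hτ.ne').1 hx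
  have hu₁ : u₁ ∈ C := hPCu ▸ (hPC _).1
  have hv₁ : v₁ ∈ D := hPDv ▸ (hPD _).1
  refine ⟨u₁, hu₁, v₁, hv₁, (isSaddlePointOn_lagrangian_iff hPC hC hPD hD hτ hu₁ hv₁).2
    ⟨hPCu, hPDv⟩, ?_, ?_⟩
  · have hcont : Continuous fun x : WithLp 2 (E × F) => PC (x.fst - τ • s) :=
      (hPC.firmlyNonexpansive hC).continuous.comp
        ((WithLp.continuous_fst 2 E F).sub continuous_const)
    simpa only [Function.comp_def, toLp_fst, ← hu, sub_sub, ← smul_add, add_comm (L.adjoint v₁),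
      hPCu] using (hcont.tendsto _).comp hlim
  · have hcont : Continuous fun x : WithLp 2 (E × F) => PD (τ⁻¹ • (x.snd - b)) :=
      (hPD.firmlyNonexpansive hD).continuous.comp
        (((WithLp.continuous_snd 2 E F).sub continuous_const).const_smul _)
    simpa only [Function.comp_def, toLp_snd, ← hw, inv_smul_add_smul_sub hτ.ne', hPDv]
      using (hcont.tendsto _).comp hlim

end DouglasRachford

open scoped RealInnerProductSpace in
theorem stmt14_general (n m : ℕ)
    (C : Set (EuclideanSpace ℝ (Fin n))) (D : Set (EuclideanSpace ℝ (Fin m)))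
    (hCcomp : IsCompact C) (hCconv : Convex ℝ C)
    (hDcomp : IsCompact D) (hDconv : Convex ℝ D)
    (L : EuclideanSpace ℝ (Fin n) →L[ℝ] EuclideanSpace ℝ (Fin m))
    (s : EuclideanSpace ℝ (Fin n)) (b : EuclideanSpace ℝ (Fin m))
    (τ : ℝ) (hτ : 0 < τ)
    (PC : EuclideanSpace ℝ (Fin n) → EuclideanSpace ℝ (Fin n))
    (hPC : ∀ y, PC y ∈ C ∧ ∀ x ∈ C, ‖y - PC y‖ ≤ ‖y - x‖)
    (PD : EuclideanSpace ℝ (Fin m) → EuclideanSpace ℝ (Fin m))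
    (hPD : ∀ y, PD y ∈ D ∧ ∀ x ∈ D, ‖y - PD y‖ ≤ ‖y - x‖)
    (g : EuclideanSpace ℝ (Fin n) → EuclideanSpace ℝ (Fin m) → ℝ)
    (hg : ∀ u v, g u v = ⟪u, s⟫ + ⟪L u, v⟫ - ⟪b, v⟫)
    (f : EuclideanSpace ℝ (Fin n) → ℝ) (hf : ∀ u, f u = sSup ((g u) '' D))
    (fD : EuclideanSpace ℝ (Fin m) → ℝ) (hfD : ∀ v, fD v = sInf ((fun u => g u v) '' C))
    -- the Douglas–Rachford iterates
    (ubar u up : ℕ → EuclideanSpace ℝ (Fin n))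
    (wbar wpp wp : ℕ → EuclideanSpace ℝ (Fin m))
    (hu : ∀ k, u k = PC (ubar k - τ • s))
    (hwpp : ∀ k, wpp k = PD ((1 / τ) • (wbar k - b)))
    (hup : ∀ k, up k + (ContinuousLinearMap.adjoint L) (L (up k)) =
      ((2 : ℝ) • u k - ubar k) +
        (ContinuousLinearMap.adjoint L) (wbar k - (2 * τ) • wpp k))
    (hwp : ∀ k, wp k = L (up k))
    (hubar : ∀ k, ubar (k + 1) = ubar k + up k - u k)
    (hwbar : ∀ k, wbar (k + 1) = wp k + τ • wpp k)
    -- a saddle point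
    (ustar : EuclideanSpace ℝ (Fin n)) (vstar : EuclideanSpace ℝ (Fin m))
    (hustar : ustar ∈ C) (hvstar : vstar ∈ D)
    (hsaddle : ∀ u' ∈ C, ∀ v' ∈ D, g ustar v' ≤ g ustar vstar ∧ g ustar vstar ≤ g u' vstar) :
    (∀ k, u k ∈ C ∧ wpp k ∈ D) ∧
    f ustar = g ustar vstar ∧ fD vstar = g ustar vstar ∧
    Filter.Tendsto (fun k => f (u k)) Filter.atTop (nhds (g ustar vstar)) ∧
    Filter.Tendsto (fun k => fD (wpp k)) Filter.atTop (nhds (g ustar vstar)) ∧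
    ∀ k, f (u k) - f ustar ≤ f (u k) - fD (wpp k) := by
  obtain rfl : g = lagrangian L s b := funext fun u => funext (hg u)
  obtain rfl : f = fun u => sSup (lagrangian L s b u '' D) := funext hf
  obtain rfl : fD = fun v => sInf ((lagrangian L s b · v) '' C) := funext hfD
  have hsaddle₀ : IsSaddlePointOn C D (lagrangian L s b) ustar vstar := fun u' hu' v' hv' =>
    (hsaddle u' hu' v' hv').1.trans (hsaddle u' hu' v' hv').2
  have hwppD (k : ℕ) : wpp k ∈ D := hwpp k ▸ (hPD _).1
  obtain ⟨u₁, hu₁, v₁, hv₁, hsaddle₁, hlimu, hlimw⟩ := exists_isSaddlePointOn_tendsto_of_drStep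
    hCconv hDconv hPC hPD hτ hu (by simpa only [one_div] using hwpp) hup hubar
    (fun k => by rw [hwbar, hwp]) hustar hvstar hsaddle₀
  have hval := hsaddle₁.apply_eq hsaddle₀ hu₁ hv₁ hustar hvstar
  have hf_cont : Continuous fun u => sSup (lagrangian L s b u '' D) :=
    hDcomp.continuous_sSup (continuous_lagrangian L s b)
  have hfD_cont : Continuous fun v => sInf ((lagrangian L s b · v) '' C) :=
    hCcomp.continuous_sInf ((continuous_lagrangian L s b).comp continuous_swap)
  refine ⟨fun k => ⟨hu k ▸ (hPC _).1, hwppD k⟩, hsaddle₀.sSup_image_eq hustar hvstar,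
    hsaddle₀.sInf_image_eq hustar hvstar, ?_, ?_, fun k => ?_⟩
  · rw [← hval, ← hsaddle₁.sSup_image_eq hu₁ hv₁]
    exact (hf_cont.tendsto u₁).comp hlimu
  · rw [← hval, ← hsaddle₁.sInf_image_eq hu₁ hv₁]
    exact (hfD_cont.tendsto v₁).comp hlimw
  · dsimp only
    rw [sub_le_sub_iff_left, hsaddle₀.sSup_image_eq hustar hvstar]
    exact hsaddle₀.sInf_image_le hustar (hwppD k) (hCcomp.bddBelow_image
      ((continuous_lagrangian L s b).comp (continuous_id.prodMk continuous_const)).continuousOn)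

open scoped RealInnerProductSpace in
theorem stmt14 (n m : ℕ)
    (C : Set (EuclideanSpace ℝ (Fin n))) (D : Set (EuclideanSpace ℝ (Fin m)))
    (hCne : C.Nonempty) (hCcomp : IsCompact C) (hCconv : Convex ℝ C)
    (hDne : D.Nonempty) (hDcomp : IsCompact D) (hDconv : Convex ℝ D)
    (L : EuclideanSpace ℝ (Fin n) →L[ℝ] EuclideanSpace ℝ (Fin m))
    (s : EuclideanSpace ℝ (Fin n)) (b : EuclideanSpace ℝ (Fin m))
    (τ : ℝ) (hτ : 0 < τ)
    (PC : EuclideanSpace ℝ (Fin n) → EuclideanSpace ℝ (Fin n))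
    (hPC : ∀ y, PC y ∈ C ∧ ∀ x ∈ C, ‖y - PC y‖ ≤ ‖y - x‖)
    (PD : EuclideanSpace ℝ (Fin m) → EuclideanSpace ℝ (Fin m))
    (hPD : ∀ y, PD y ∈ D ∧ ∀ x ∈ D, ‖y - PD y‖ ≤ ‖y - x‖)
    (g : EuclideanSpace ℝ (Fin n) → EuclideanSpace ℝ (Fin m) → ℝ)
    (hg : ∀ u v, g u v = ⟪u, s⟫ + ⟪L u, v⟫ - ⟪b, v⟫)
    (f : EuclideanSpace ℝ (Fin n) → ℝ) (hf : ∀ u, f u = sSup ((g u) '' D))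
    (fD : EuclideanSpace ℝ (Fin m) → ℝ) (hfD : ∀ v, fD v = sInf ((fun u => g u v) '' C))
    -- the Douglas–Rachford iterates
    (ubar u up : ℕ → EuclideanSpace ℝ (Fin n))
    (wbar wpp wp : ℕ → EuclideanSpace ℝ (Fin m))
    (hu : ∀ k, u k = PC (ubar k - τ • s))
    (hwpp : ∀ k, wpp k = PD ((1 / τ) • (wbar k - b)))
    (hup : ∀ k, up k + (ContinuousLinearMap.adjoint L) (L (up k)) =
      ((2 : ℝ) • u k - ubar k) +
        (ContinuousLinearMap.adjoint L) (wbar k - (2 * τ) • wpp k))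
    (hwp : ∀ k, wp k = L (up k))
    (hubar : ∀ k, ubar (k + 1) = ubar k + up k - u k)
    (hwbar : ∀ k, wbar (k + 1) = wp k + τ • wpp k)
    -- a saddle point
    (ustar : EuclideanSpace ℝ (Fin n)) (vstar : EuclideanSpace ℝ (Fin m))
    (hustar : ustar ∈ C) (hvstar : vstar ∈ D)
    (hsaddle : ∀ u' ∈ C, ∀ v' ∈ D, g ustar v' ≤ g ustar vstar ∧ g ustar vstar ≤ g u' vstar) :
    (∀ k, u k ∈ C ∧ wpp k ∈ D) ∧
    f ustar = g ustar vstar ∧ fD vstar = g ustar vstar ∧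
    Filter.Tendsto (fun k => f (u k)) Filter.atTop (nhds (g ustar vstar)) ∧
    Filter.Tendsto (fun k => fD (wpp k)) Filter.atTop (nhds (g ustar vstar)) ∧
    ∀ k, f (u k) - f ustar ≤ f (u k) - fD (wpp k) :=
  stmt14_general n m C D hCcomp hCconv hDcomp hDconv L s b τ hτ PC hPC PD hPD g hg f hf fD hfD ubar
    u up wbar wpp wp hu hwpp hup hwp hubar hwbar ustar vstar hustar hvstar hsaddle
end

section
/- Let C ⊆ ℝ^n and D ⊆ ℝ^m be nonempty compact convex sets, L ∈ ℝ^{m×n}, s ∈ ℝ^n, b ∈ ℝ^m, τ > 0. Consider one step of the primal Douglas–Rachford update from (ū, w̄) ∈ ℝ^n × ℝ^m: u := Π_C(ū − τs), w'' := Π_D((1/τ)(w̄ − b)), u' := (I + LᵀL)^{−1}((2u − ū) + Lᵀ(w̄ − 2τ w'')), w' := Lu', ū⁺ := ū + u' − u, w̄⁺ := w' + τ w''; and one step of the dual Douglas–Rachford update with step size τ_D := 1/τ from (v̄, z̄) ∈ ℝ^m × ℝ^n: v := Π_D(v̄ − τ_D b), z'' := Π_C((1/τ_D)(z̄ − s)),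 v' := (I + LLᵀ)^{−1}((2v − v̄) − L(z̄ − 2τ_D z'')), z' := −Lᵀv', v̄⁺ := v̄ + v' − v, z̄⁺ := z' + τ_D z''. If ū = τ·z̄ and w̄ = τ·v̄, then u = z'', w'' = v, ū⁺ = τ·z̄⁺, and w̄⁺ = τ·v̄⁺. -/
/-!
Under `ū = τ z̄`, `w̄ = τ v̄` and `τ_D = 1/τ` the two projection steps have the same arguments.
For the linear step, scaling the dual resolvent equation by `τ` shows that `p := τ v'` solves
`p + L Lᵀ p = L a - c` with `a = 2u - ū`, `c = w̄ - 2τ w''`. Then `L (a - Lᵀ p) = p + c`, so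
`a - Lᵀ p` solves the primal equation `(I + LᵀL) x = a + Lᵀ c`, and since `I + LᵀL` is injective
(`⟪x + LᵀL x, x⟫ = ‖x‖² + ‖L x‖²`) it equals `u'`.
-/

open ContinuousLinearMap

section Resolvent

variable {𝕜 E F : Type*} [RCLike 𝕜]
  [NormedAddCommGroup E] [InnerProductSpace 𝕜 E] [CompleteSpace E]
  [NormedAddCommGroup F] [InnerProductSpace 𝕜 F] [CompleteSpace F]

theorem add_adjoint_comp_self_injective (L : E →L[𝕜] F) :
    Function.Injective fun x => x + adjoint L (L x) := by
  intro x y (hxy : x + adjoint L (L x) = y + adjoint L (L y))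
  set d := x - y
  have hd : d + adjoint L (L d) = 0 := by
    simp only [d, map_sub]
    rw [sub_add_sub_comm, hxy, sub_self]
  have hnorm : ‖d‖ ^ 2 + ‖L d‖ ^ 2 = 0 := by
    have := congrArg (fun z => RCLike.re (inner 𝕜 z d)) hd
    simpa only [inner_add_left, map_add, adjoint_inner_left, inner_zero_left, map_zero,
      inner_self_eq_norm_sq] using this
  have : ‖d‖ = 0 := by nlinarith [sq_nonneg ‖d‖, sq_nonneg ‖L d‖, norm_nonneg d]
  exact sub_eq_zero.mp (norm_eq_zero.mp this)

theorem apply_sub_adjoint_eq_of_add_apply_adjoint_eq (L : E →L[𝕜] F) {a : E} {c p : F}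
    (hp : p + L (adjoint L p) = L a - c) :
    L (a - adjoint L p) = p + c := by
  have hLp : L (adjoint L p) = L a - c - p := by rw [← hp]; abel
  rw [map_sub, hLp]
  abel

theorem eq_sub_adjoint_of_add_adjoint_comp_self_eq (L : E →L[𝕜] F) {x a : E} {c p : F}
    (hx : x + adjoint L (L x) = a + adjoint L c)
    (hp : p + L (adjoint L p) = L a - c) :
    x = a - adjoint L p := by
  refine add_adjoint_comp_self_injective L ?_
  simp only [hx, apply_sub_adjoint_eq_of_add_apply_adjoint_eq L hp, map_add]
  abel

end Resolvent

theorem stmt15_general (n m : ℕ)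
    (L : EuclideanSpace ℝ (Fin n) →L[ℝ] EuclideanSpace ℝ (Fin m))
    (s : EuclideanSpace ℝ (Fin n)) (b : EuclideanSpace ℝ (Fin m))
    (τ τD : ℝ) (hτ : 0 < τ) (hτD : τD = 1 / τ)
    (PC : EuclideanSpace ℝ (Fin n) → EuclideanSpace ℝ (Fin n))
    (PD : EuclideanSpace ℝ (Fin m) → EuclideanSpace ℝ (Fin m))
    -- one primal step from (ubar, wbar)
    (ubar u up : EuclideanSpace ℝ (Fin n))
    (wbar wpp wp : EuclideanSpace ℝ (Fin m))
    (hu : u = PC (ubar - τ • s))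
    (hwpp : wpp = PD ((1 / τ) • (wbar - b)))
    (hup : up + (ContinuousLinearMap.adjoint L) (L up) =
      ((2 : ℝ) • u - ubar) + (ContinuousLinearMap.adjoint L) (wbar - (2 * τ) • wpp))
    (hwp : wp = L up)
    -- one dual step from (vbar, zbar)
    (vbar v vp : EuclideanSpace ℝ (Fin m))
    (zbar zpp zp : EuclideanSpace ℝ (Fin n))
    (hv : v = PD (vbar - τD • b))
    (hzpp : zpp = PC ((1 / τD) • (zbar - s)))
    (hvp : vp + L ((ContinuousLinearMap.adjoint L) vp) =
      ((2 : ℝ) • v - vbar) - L (zbar - (2 * τD) • zpp))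
    (hzp : zp = -((ContinuousLinearMap.adjoint L) vp))
    -- matching initialization
    (hub : ubar = τ • zbar) (hwb : wbar = τ • vbar) :
    u = zpp ∧ wpp = v ∧
    ubar + up - u = τ • (zp + τD • zpp) ∧
    wp + τ • wpp = τ • (vbar + vp - v) := by
  have hττD : τ * τD = 1 := by rw [hτD, mul_one_div_cancel hτ.ne']
  have huz : u = zpp := by rw [hu, hzpp, hub, hτD, one_div_one_div, smul_sub]
  have hwv : wpp = v := by
    rw [hwpp, hv, hwb, hτD, smul_sub, smul_smul, one_div_mul_cancel hτ.ne', one_smul]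
  have hdual :
      τ • vp + L (adjoint L (τ • vp)) = L ((2 : ℝ) • u - ubar) - (wbar - (2 * τ) • wpp) := by
    rw [map_smul, map_smul, ← smul_add, hvp, hub, hwb, huz, hwv]
    simp only [map_sub, map_smul]
    linear_combination (norm := module) (2 * hττD) • L zpp
  have hup' : up = (2 : ℝ) • u - ubar - adjoint L (τ • vp) :=
    eq_sub_adjoint_of_add_adjoint_comp_self_eq L hup hdual
  have hwp' : wp = τ • vp + (wbar - (2 * τ) • wpp) := by
    rw [hwp, hup', apply_sub_adjoint_eq_of_add_apply_adjoint_eq L hdual]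
  refine ⟨huz, hwv, ?_, ?_⟩
  · rw [hup', hzp, huz, map_smul]
    linear_combination (norm := module) -hττD • zpp
  · rw [hwp', hwb, hwv]
    module

theorem stmt15 (n m : ℕ)
    (C : Set (EuclideanSpace ℝ (Fin n))) (D : Set (EuclideanSpace ℝ (Fin m)))
    (hCne : C.Nonempty) (hCcomp : IsCompact C) (hCconv : Convex ℝ C)
    (hDne : D.Nonempty) (hDcomp : IsCompact D) (hDconv : Convex ℝ D)
    (L : EuclideanSpace ℝ (Fin n) →L[ℝ] EuclideanSpace ℝ (Fin m))
    (s : EuclideanSpace ℝ (Fin n)) (b : EuclideanSpace ℝ (Fin m))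
    (τ τD : ℝ) (hτ : 0 < τ) (hτD : τD = 1 / τ)
    (PC : EuclideanSpace ℝ (Fin n) → EuclideanSpace ℝ (Fin n))
    (hPC : ∀ y, PC y ∈ C ∧ ∀ x ∈ C, ‖y - PC y‖ ≤ ‖y - x‖)
    (PD : EuclideanSpace ℝ (Fin m) → EuclideanSpace ℝ (Fin m))
    (hPD : ∀ y, PD y ∈ D ∧ ∀ x ∈ D, ‖y - PD y‖ ≤ ‖y - x‖)
    -- one primal step from (ubar, wbar)
    (ubar u up : EuclideanSpace ℝ (Fin n))
    (wbar wpp wp : EuclideanSpace ℝ (Fin m))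
    (hu : u = PC (ubar - τ • s))
    (hwpp : wpp = PD ((1 / τ) • (wbar - b)))
    (hup : up + (ContinuousLinearMap.adjoint L) (L up) =
      ((2 : ℝ) • u - ubar) + (ContinuousLinearMap.adjoint L) (wbar - (2 * τ) • wpp))
    (hwp : wp = L up)
    -- one dual step from (vbar, zbar)
    (vbar v vp : EuclideanSpace ℝ (Fin m))
    (zbar zpp zp : EuclideanSpace ℝ (Fin n))
    (hv : v = PD (vbar - τD • b))
    (hzpp : zpp = PC ((1 / τD) • (zbar - s)))
    (hvp : vp + L ((ContinuousLinearMap.adjoint L) vp) =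
      ((2 : ℝ) • v - vbar) - L (zbar - (2 * τD) • zpp))
    (hzp : zp = -((ContinuousLinearMap.adjoint L) vp))
    -- matching initialization
    (hub : ubar = τ • zbar) (hwb : wbar = τ • vbar) :
    u = zpp ∧ wpp = v ∧
    ubar + up - u = τ • (zp + τD • zpp) ∧
    wp + τ • wpp = τ • (vbar + vp - v) :=
  stmt15_general n m L s b τ τD hτ hτD PC PD ubar u up wbar wpp wp hu hwpp hup hwp vbar v vp zbar
    zpp zp hv hzpp hvp hzp hub hwb
end
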